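/- arXiv:0901.4030 — 6 statements merged into one kernel-verified Lean document; each statement's English description precedes it below -/
import Mathlib

section
/- Let n ≥ 1 and let f and g be monic complex polynomials of degree n. Then the sets {z ∈ ℂ : Re(f(z)) = 0} and {z ∈ ℂ : Re(g(z)) = 0} are equal if and only if f − g is a constant purely imaginary polynomial, i.e., there exists t ∈ ℝ such that f(z) − g(z) = t·i for all z. -/
/-!
On a large circle `‖z‖ = R` a monic `f` of degree `n` is dominated by `z ^ n`, so `Re f` has the
sign of `(-1) ^ j` at the points `R e^{iπj/n}`; hence `R(f)` meets the circle in at least `2n`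
points. If `R(f) = R(g)`, then `h = f - g`, of degree `< n`, has `Re h = 0` at these `2n` points.
With `d = deg h < n` and `conj z = R² / z` on the circle, `z ^ d (h + conj h) = 2 z ^ d Re h`
agrees there with `X ^ d h + q` for a polynomial `q` of degree `≤ d`; having `2n > 2d` roots, this
polynomial vanishes, so `X ^ d h = -q` forces `d = 0`.
-/

open Polynomial Filter Asymptotics Set ComplexConjugate

namespace Polynomial

lemma exists_norm_eval_lt_pow_of_natDegree_lt {𝕜 : Type*} [NormedField 𝕜]
    {p : 𝕜[X]} {n : ℕ} (hp : p.natDegree < n) :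
    ∃ R > 0, ∀ z : 𝕜, ‖z‖ = R → ‖p.eval z‖ < R ^ n := by
  have hdeg : p.degree < (X ^ n : 𝕜[X]).degree := by
    rw [degree_X_pow]
    exact degree_le_natDegree.trans_lt (by exact_mod_cast hp)
  have hsmall : ∀ᶠ z in Bornology.cobounded 𝕜, ‖p.eval z‖ ≤ 2⁻¹ * ‖z ^ n‖ := by
    simpa using (isLittleO_cobounded_of_degree_lt hdeg).def (by norm_num : (0 : ℝ) < 2⁻¹)
  obtain ⟨r, -, hr⟩ :=
    (Metric.hasBasis_cobounded_compl_closedBall (0 : 𝕜)).eventually_iff.mp hsmall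
  refine ⟨max r 0 + 1, by positivity, fun z hz => ?_⟩
  have hzr : z ∈ (Metric.closedBall 0 r)ᶜ := by
    rw [mem_compl_iff, Metric.mem_closedBall, dist_zero_right, hz, not_le]
    linarith [le_max_left r 0]
  have hle := hr hzr
  rw [norm_pow, hz] at hle
  have : 0 < (max r 0 + 1) ^ n := by positivity
  linarith

noncomputable def conjReflect (R : ℝ) (p : ℂ[X]) : ℂ[X] :=
  ∑ k ∈ Finset.range (p.natDegree + 1),
    C (conj (p.coeff k) * (R : ℂ) ^ (2 * k)) * X ^ (p.natDegree - k)

lemma natDegree_conjReflect_le (R : ℝ) (p : ℂ[X]) :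
    (conjReflect R p).natDegree ≤ p.natDegree :=
  natDegree_sum_le_of_forall_le _ _ fun _ _ =>
    (natDegree_C_mul_X_pow_le _ _).trans (Nat.sub_le _ _)

lemma eval_conjReflect {R : ℝ} (p : ℂ[X]) {z : ℂ} (hz : ‖z‖ = R) :
    (conjReflect R p).eval z = z ^ p.natDegree * conj (p.eval z) := by
  have hzz : z * conj z = (R : ℂ) ^ 2 := by rw [Complex.mul_conj', hz]
  rw [conjReflect, eval_finsetSum, eval_eq_sum_range, map_sum, Finset.mul_sum]
  refine Finset.sum_congr rfl fun k hk => ?_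
  obtain ⟨m, hm⟩ := Nat.exists_eq_add_of_le (Nat.lt_succ_iff.mp (Finset.mem_range.mp hk))
  rw [hm, Nat.add_sub_cancel_left, eval_mul, eval_C, eval_pow, eval_X, map_mul, map_pow, pow_mul,
    ← hzz]
  ring

lemma exists_eq_C_mul_I_of_re_eval_eq_zero {p : ℂ[X]} {s : Finset ℂ} {R : ℝ}
    (hs : ∀ z ∈ s, ‖z‖ = R) (hcard : 2 * p.natDegree < s.card)
    (hre : ∀ z ∈ s, (p.eval z).re = 0) : ∃ t : ℝ, p = C (t * Complex.I) := by
  set d := p.natDegree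
  have hq : X ^ d * p + conjReflect R p = 0 := by
    refine eq_zero_of_natDegree_lt_card_of_eval_eq_zero' _ s (fun z hz => ?_) ?_
    · rw [eval_add, eval_conjReflect p (hs z hz), eval_mul, eval_pow, eval_X, ← mul_add,
        Complex.add_conj, hre z hz]
      simp
    · refine (natDegree_add_le _ _).trans_lt (max_lt ?_ ?_)
      · exact natDegree_mul_le.trans_lt (by rw [natDegree_X_pow]; omega)
      · exact (natDegree_conjReflect_le R p).trans_lt (by omega)
  have hd : d = 0 := by
    by_contra hd
    have hp : p ≠ 0 := fun h => hd (by simp [d, h])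
    have := (natDegree_X_pow_mul (n := d) hp).symm.trans_le
      ((congrArg natDegree (eq_neg_of_add_eq_zero_left hq)).trans_le
        ((natDegree_neg _).trans_le (natDegree_conjReflect_le R p)))
    omega
  obtain ⟨z, hz⟩ := Finset.card_pos.mp (by omega : 0 < s.card)
  have hre0 := hre z hz
  rw [eq_C_of_natDegree_eq_zero hd, eval_C] at hre0
  refine ⟨(p.coeff 0).im, ?_⟩
  rw [eq_C_of_natDegree_eq_zero hd]
  exact congrArg C (Complex.ext (by simpa using hre0) (by simp))

end Polynomial

lemma exists_strictMono_zeros_of_alternating {F : ℝ → ℝ} (hF : Continuous F) {θ : ℕ → ℝ}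
    (hθ : Monotone θ) (halt : ∀ j, 0 < (-1) ^ j * F (θ j)) :
    ∃ x : ℕ → ℝ, StrictMono x ∧ ∀ j, x j ∈ Ioo (θ j) (θ (j + 1)) ∧ F (x j) = 0 := by
  have hzero : ∀ j, ∃ x ∈ Ioo (θ j) (θ (j + 1)), F x = 0 := by
    intro j
    have hnext : (-1) ^ j * F (θ (j + 1)) < 0 := by
      have := halt (j + 1)
      rw [pow_succ] at this
      linarith
    obtain ⟨x, hx, hFx⟩ := intermediate_value_Ioo' (hθ j.le_succ)
      (continuous_const.mul hF).continuousOn ⟨hnext, halt j⟩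
    exact ⟨x, hx, by simpa using hFx⟩
  choose x hx hFx using hzero
  exact ⟨x, strictMono_nat_of_lt_succ fun j => (hx j).2.trans (hx (j + 1)).1,
    fun j => ⟨hx j, hFx j⟩⟩

lemma Complex.neg_one_pow_mul_re_pos {w : ℂ} {a : ℝ} (j : ℕ)
    (h : ‖w - ((-1) ^ j * a : ℝ)‖ < a) : 0 < (-1) ^ j * w.re := by
  have := (Complex.abs_re_le_norm _).trans_lt h
  rw [Complex.sub_re, Complex.ofReal_re] at this
  rcases neg_one_pow_eq_or ℝ j with hj | hj <;> rw [hj] at this ⊢ <;> linarith [abs_lt.mp this]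

lemma Circle.ofReal_mul_exp_pi_div_pow (R : ℝ) {n : ℕ} (hn : n ≠ 0) (j : ℕ) :
    ((R : ℂ) * Circle.exp (j * Real.pi / n)) ^ n = ((-1) ^ j * R ^ n : ℝ) := by
  have : (n : ℂ) * ((j * Real.pi / n : ℝ) * Complex.I) = j * (Real.pi * Complex.I) := by
    push_cast
    field_simp
  rw [mul_pow, Circle.coe_exp, ← Complex.exp_nat_mul, this, Complex.exp_nat_mul,
    Complex.exp_pi_mul_I]
  push_cast
  ring

lemma Polynomial.IsMonicOfDegree.exists_finset_re_eval_eq_zero {f : ℂ[X]} {n : ℕ}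
    (hf : f.IsMonicOfDegree n) (hn : n ≠ 0) :
    ∃ (R : ℝ) (s : Finset ℂ), s.card = 2 * n ∧ (∀ z ∈ s, ‖z‖ = R) ∧
      ∀ z ∈ s, (f.eval z).re = 0 := by
  obtain ⟨R, hR, hdom⟩ := exists_norm_eval_lt_pow_of_natDegree_lt (hf.natDegree_sub_X_pow hn)
  set z : ℝ → ℂ := fun t => R * Circle.exp t
  have hz : ∀ t, ‖z t‖ = R := fun t => by simp [z, hR.le]
  set θ : ℕ → ℝ := fun j => j * Real.pi / n
  have hθ : Monotone θ := fun i j hij => by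
    simp only [θ]
    gcongr
  have halt : ∀ j, 0 < (-1) ^ j * (f.eval (z (θ j))).re := fun j =>
    Complex.neg_one_pow_mul_re_pos (a := R ^ n) j (by
      have h := hdom (z (θ j)) (hz (θ j))
      simp only [z, θ] at h ⊢
      rwa [eval_sub, eval_pow, eval_X, Circle.ofReal_mul_exp_pi_div_pow R hn j] at h)
  obtain ⟨x, hxmono, hxf⟩ := exists_strictMono_zeros_of_alternating
    (by fun_prop : Continuous fun t => (f.eval (z t)).re) hθ halt
  choose hx hfx using hxf
  have hθ0 : θ 0 = 0 := by simp [θ]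
  have hθ2n : θ (2 * n) = 2 * Real.pi := by
    simp only [θ]
    push_cast
    field_simp
  have hmaps : MapsTo x (Finset.range (2 * n)) (Ico 0 (2 * Real.pi)) := by
    intro j hj
    have hj : j + 1 ≤ 2 * n := Finset.mem_range.mp hj
    exact ⟨hθ0 ▸ (hθ (Nat.zero_le j)).trans (hx j).1.le, hθ2n ▸ (hx j).2.trans_le (hθ hj)⟩
  have hinj : InjOn z (Ico 0 (2 * Real.pi)) :=
    ((mul_right_injective₀ (by exact_mod_cast hR.ne')).comp Subtype.val_injective).comp_injOn
      (Circle.exp_injOn_Ico (by simp))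
  refine ⟨R, (Finset.range (2 * n)).image (z ∘ x), ?_, ?_, ?_⟩
  · rw [Finset.card_image_of_injOn (hinj.comp hxmono.injective.injOn hmaps), Finset.card_range]
  · simp [hz]
  · simpa using fun j _ => hfx j

/-- For monic complex polynomials `f` and `g` of degree `n ≥ 1`, the real components
`R(f) = {z | Re (f z) = 0}` and `R(g)` coincide iff `f - g` is a constant purely
imaginary polynomial. -/
theorem stmt0 (n : ℕ) (hn : 1 ≤ n) (f g : Polynomial ℂ)
    (hf : f.Monic) (hg : g.Monic) (hfd : f.natDegree = n) (hgd : g.natDegree = n) :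
    {z : ℂ | (f.eval z).re = 0} = {z : ℂ | (g.eval z).re = 0} ↔
      ∃ t : ℝ, ∀ z : ℂ, f.eval z - g.eval z = (t : ℂ) * Complex.I := by
  have hF : f.IsMonicOfDegree n := ⟨hfd, hf⟩
  have hG : g.IsMonicOfDegree n := ⟨hgd, hg⟩
  constructor
  · intro hset
    obtain ⟨R, s, hcard, hs, hre⟩ := hF.exists_finset_re_eval_eq_zero (by omega)
    have hdeg := hF.natDegree_sub_lt (by omega) hG
    have hre_sub : ∀ z ∈ s, ((f - g).eval z).re = 0 := fun z hz => by
      have hgz : z ∈ {z : ℂ | (g.eval z).re = 0} := hset ▸ hre z hz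
      rw [eval_sub, Complex.sub_re, hre z hz, mem_ofPred_eq.mp hgz, sub_zero]
    obtain ⟨t, ht⟩ := exists_eq_C_mul_I_of_re_eval_eq_zero hs (by omega) hre_sub
    exact ⟨t, fun z => by rw [← eval_sub, ht, eval_C]⟩
  · rintro ⟨t, ht⟩
    ext z
    have hre := congrArg Complex.re (ht z)
    simp only [Complex.sub_re, Complex.re_ofReal_mul, Complex.I_re, mul_zero] at hre
    simp only [mem_ofPred_eq]
    constructor <;> intro <;> linarith
end

section
/- Let n ≥ 1 and let f and g be monic complex polynomials of degree n. Then the sets {z ∈ ℂ : Im(f(z)) = 0} and {z ∈ ℂ : Im(g(z)) = 0} are equal if and only if f − g is a constant real polynomial, i.e., there exists t ∈ ℝ such that f(z) − g(z) = t for all z. -/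
/-!
If `I(f) = I(g)`, then `h = f - g` has degree `m < n` and `Im h` vanishes on `I(f)`. Since
`f(z) ~ z ^ n`, on every large circle `Im f` changes sign around each angle `α` with
`sin (n α) = 0`, so `I(f)` contains points `R e^{iθ}` with `R → ∞` and `θ → α`. Along them
`h(z) / R ^ m → c e^{i m α}` (`c` the leading coefficient of `h`), which is therefore real.
For `α = 0` and `α = π / n` this forces `c = 0` when `0 < m < n`; hence `h` is a constant,
and the constant is real because `I(f)` contains a root of `f`.
-/

open Polynomial Complex Filter Topology Bornology Asymptotics
open scoped Real

namespace Complex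

theorem tendsto_ofReal_mul_exp_mul_I_cobounded (l : Filter ℝ) :
    Tendsto (fun q : ℝ × ℝ => (q.1 : ℂ) * exp (q.2 * I)) (atTop ×ˢ l) (cobounded ℂ) := by
  rw [← tendsto_norm_atTop_iff_cobounded]
  refine (tendsto_abs_atTop_atTop.comp tendsto_fst).congr fun q => ?_
  simp [norm_exp_ofReal_mul_I]

theorem ofReal_mul_exp_mul_I_pow (R θ : ℝ) (m : ℕ) :
    ((R : ℂ) * exp (θ * I)) ^ m = (R : ℂ) ^ m * exp (m * θ * I) := by
  rw [mul_pow, ← exp_nat_mul, mul_assoc]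

theorem abs_im_mul_exp_sub_sin_le (w : ℂ) (x : ℝ) :
    |(w * exp (x * I)).im - Real.sin x| ≤ ‖w - 1‖ := by
  have : (w * exp (x * I)).im - Real.sin x = ((w - 1) * exp (x * I)).im := by
    rw [sub_mul, one_mul, sub_im, exp_ofReal_mul_I_im]
  rw [this]
  exact (abs_im_le_norm _).trans (by rw [norm_mul, norm_exp_ofReal_mul_I, mul_one])

end Complex

namespace Polynomial

theorem tendsto_eval_div_pow_natDegree {𝕜 : Type*} [NormedField 𝕜] (p : 𝕜[X]) :
    Tendsto (fun z => p.eval z / z ^ p.natDegree) (cobounded 𝕜) (𝓝 p.leadingCoeff) := by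
  have hne : ∀ᶠ z : 𝕜 in cobounded 𝕜, z ≠ 0 :=
    (tendsto_norm_cobounded_atTop.eventually (eventually_gt_atTop 0)).mono
      fun _ hz => norm_pos_iff.mp hz
  refine ((isEquivalent_cobounded_leading_monomial (P := p)).div IsEquivalent.refl).symm
    |>.tendsto_nhds (tendsto_const_nhds.congr' ?_)
  filter_upwards [hne] with z hz
  simp [hz]

theorem eval_ofReal_mul_exp_mul_I_div_ofReal_pow (p : ℂ[X]) (R θ : ℝ) (m : ℕ) :
    p.eval (R * exp (θ * I)) / (R : ℂ) ^ m =
      p.eval (R * exp (θ * I)) / (R * exp (θ * I)) ^ m * exp (m * θ * I) := by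
  rw [ofReal_mul_exp_mul_I_pow, div_mul_eq_div_div, div_mul_cancel₀ _ (exp_ne_zero _)]

theorem tendsto_eval_ofReal_mul_exp_mul_I_div (p : ℂ[X]) (α : ℝ) :
    Tendsto (fun q : ℝ × ℝ => p.eval (q.1 * exp (q.2 * I)) / (q.1 : ℂ) ^ p.natDegree)
      (atTop ×ˢ 𝓝 α) (𝓝 (p.leadingCoeff * exp (p.natDegree * α * I))) := by
  have hexp : Tendsto (fun q : ℝ × ℝ => exp (p.natDegree * q.2 * I)) (atTop ×ˢ 𝓝 α)
      (𝓝 (exp (p.natDegree * α * I))) :=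
    ((by fun_prop : Continuous fun θ : ℝ => exp (p.natDegree * θ * I)).tendsto α).comp tendsto_snd
  exact ((p.tendsto_eval_div_pow_natDegree.comp (tendsto_ofReal_mul_exp_mul_I_cobounded _)).mul
    hexp).congr fun q => (p.eval_ofReal_mul_exp_mul_I_div_ofReal_pow _ _ _).symm

theorem Monic.eventually_exists_im_eval_eq_zero {f : ℂ[X]} (hf : f.Monic)
    {α ε : ℝ} (hα : Real.sin (f.natDegree * α) = 0) (hε : 0 < ε)
    (hεπ : f.natDegree * ε < π) (hn : 0 < f.natDegree) :
    ∀ᶠ R : ℝ in atTop, ∃ θ ∈ Set.Icc (α - ε) (α + ε), (f.eval (R * exp (θ * I))).im = 0 := by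
  set n := f.natDegree
  set s := Real.sin (n * ε)
  have hs : 0 < s := Real.sin_pos_of_pos_of_lt_pi (by positivity) hεπ
  have hclose (θ : ℝ) :
      ∀ᶠ R : ℝ in atTop, ‖f.eval (R * exp (θ * I)) / (R * exp (θ * I)) ^ n - 1‖ < s := by
    have hlim := f.tendsto_eval_div_pow_natDegree.comp <|
      (tendsto_ofReal_mul_exp_mul_I_cobounded (pure θ)).comp
        (tendsto_id.prodMk tendsto_const_pure)
    rw [hf.leadingCoeff] at hlim
    simpa [dist_eq_norm] using Metric.tendsto_nhds.mp hlim s hs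
  filter_upwards [hclose (α - ε), hclose (α + ε), eventually_ne_atTop 0] with R hlo hhi hR
  set φ : ℝ → ℝ := fun θ => (f.eval (R * exp (θ * I)) / (R : ℂ) ^ n).im
  have hφ_cont : Continuous φ := by fun_prop
  have hφ (θ : ℝ) : |φ θ - Real.sin (n * θ)| ≤
      ‖f.eval (R * exp (θ * I)) / (R * exp (θ * I)) ^ n - 1‖ := by
    simp only [φ, eval_ofReal_mul_exp_mul_I_div_ofReal_pow]
    exact_mod_cast abs_im_mul_exp_sub_sin_le _ (n * θ)
  have hsin_lo : Real.sin (n * (α - ε)) = -Real.cos (n * α) * s := by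
    rw [mul_sub, Real.sin_sub, hα]; ring
  have hsin_hi : Real.sin (n * (α + ε)) = Real.cos (n * α) * s := by
    rw [mul_add, Real.sin_add, hα]; ring
  have hφ_lo := abs_lt.mp ((hφ (α - ε)).trans_lt hlo)
  have hφ_hi := abs_lt.mp ((hφ (α + ε)).trans_lt hhi)
  have hab : α - ε ≤ α + ε := by linarith
  obtain ⟨θ, hθ, hφθ⟩ : ∃ θ ∈ Set.Icc (α - ε) (α + ε), φ θ = 0 := by
    rcases Real.sin_eq_zero_iff_cos_eq.mp hα with hσ | hσ <;> rw [hσ] at hsin_lo hsin_hi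
    · exact intermediate_value_Icc hab hφ_cont.continuousOn ⟨by linarith, by linarith⟩
    · exact intermediate_value_Icc' hab hφ_cont.continuousOn ⟨by linarith, by linarith⟩
  exact ⟨θ, hθ, by simpa [φ, ← ofReal_pow, div_ofReal_im, hR] using hφθ⟩

theorem Monic.frequently_im_eval_eq_zero {f : ℂ[X]} (hf : f.Monic)
    {α : ℝ} (hα : Real.sin (f.natDegree * α) = 0) (hn : 0 < f.natDegree) :
    ∃ᶠ q : ℝ × ℝ in atTop ×ˢ 𝓝 α, (f.eval (q.1 * exp (q.2 * I))).im = 0 := by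
  rw [(atTop_basis.prod Metric.nhds_basis_closedBall).frequently_iff]
  rintro ⟨M, ε⟩ ⟨-, hε⟩
  set ε' := min ε (π / (2 * f.natDegree))
  have hε' : 0 < ε' := lt_min hε (by positivity)
  have hε'π : f.natDegree * ε' < π :=
    calc f.natDegree * ε' ≤ f.natDegree * (π / (2 * f.natDegree)) := by
          gcongr; exact min_le_right _ _
      _ < π := by field_simp; linarith [Real.pi_pos]
  obtain ⟨R, ⟨θ, hθ, hzero⟩, hRM⟩ :=
    ((hf.eventually_exists_im_eval_eq_zero hα hε' hε'π hn).and (eventually_ge_atTop M)).exists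
  refine ⟨(R, θ), ⟨hRM, ?_⟩, hzero⟩
  rw [Real.closedBall_eq_Icc]
  exact Set.Icc_subset_Icc (by gcongr; exact min_le_left _ _) (by gcongr; exact min_le_left _ _) hθ

theorem Monic.im_leadingCoeff_mul_exp_eq_zero {f h : ℂ[X]} (hf : f.Monic)
    (hfh : ∀ z, (f.eval z).im = 0 → (h.eval z).im = 0) {α : ℝ}
    (hα : Real.sin (f.natDegree * α) = 0) (hn : 0 < f.natDegree) :
    (h.leadingCoeff * exp (h.natDegree * α * I)).im = 0 := by
  refine tendsto_nhds_unique_of_frequently_eq ((continuous_im.tendsto _).comp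
    (h.tendsto_eval_ofReal_mul_exp_mul_I_div α)) tendsto_const_nhds ?_
  refine (hf.frequently_im_eval_eq_zero hα hn).mono fun q hq => ?_
  simp [← ofReal_pow, div_ofReal_im, hfh _ hq]

theorem Monic.natDegree_eq_zero_of_im_eval_eq_zero {f h : ℂ[X]} (hf : f.Monic)
    (hfh : ∀ z, (f.eval z).im = 0 → (h.eval z).im = 0) (hdeg : h.natDegree < f.natDegree) :
    h.natDegree = 0 := by
  set m := h.natDegree
  set n := f.natDegree
  have hn : 0 < n := by omega
  by_contra hm
  have hc : h.leadingCoeff ≠ 0 := leadingCoeff_ne_zero.mpr fun h0 => hm (by simp [m, h0])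
  have him : h.leadingCoeff.im = 0 := by
    simpa using hf.im_leadingCoeff_mul_exp_eq_zero hfh (α := 0) (by simp) hn
  have hre := hf.im_leadingCoeff_mul_exp_eq_zero hfh (α := π / n)
    (by rw [mul_div_cancel₀ _ (by positivity), Real.sin_pi]) hn
  have hsin : 0 < Real.sin (m * (π / n)) := by
    apply Real.sin_pos_of_pos_of_lt_pi (by positivity)
    rw [← mul_div_assoc, div_lt_iff₀ (by positivity), mul_comm π]
    exact mul_lt_mul_of_pos_right (Nat.cast_lt.mpr hdeg) Real.pi_pos
  rw [← ofReal_natCast, ← ofReal_mul, mul_im, exp_ofReal_mul_I_re, exp_ofReal_mul_I_im, him,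
    zero_mul, add_zero] at hre
  exact hc (Complex.ext ((mul_eq_zero.mp hre).resolve_right hsin.ne') him)

theorem Monic.exists_eq_C_ofReal_of_im_eval_eq_zero {f h : ℂ[X]} (hf : f.Monic)
    (hfh : ∀ z, (f.eval z).im = 0 → (h.eval z).im = 0) (hdeg : h.natDegree < f.natDegree) :
    ∃ t : ℝ, h = C (t : ℂ) := by
  have hh := eq_C_of_natDegree_eq_zero (hf.natDegree_eq_zero_of_im_eval_eq_zero hfh hdeg)
  obtain ⟨z, hz⟩ := exists_root (natDegree_pos_iff_degree_pos.mp (by omega : 0 < f.natDegree))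
  have him : (h.coeff 0).im = 0 := by
    have := hfh z (by simp [hz.eq_zero])
    rwa [hh, eval_C] at this
  exact ⟨(h.coeff 0).re, by rw [hh]; congr 1; exact Complex.ext (by simp) (by simp [him])⟩

end Polynomial

/-- For monic complex polynomials `f` and `g` of degree `n ≥ 1`, the imaginary components
`I(f) = {z | Im (f z) = 0}` and `I(g)` coincide iff `f - g` is a constant real polynomial. -/
theorem stmt1 (n : ℕ) (hn : 1 ≤ n) (f g : Polynomial ℂ)
    (hf : f.Monic) (hg : g.Monic) (hfd : f.natDegree = n) (hgd : g.natDegree = n) :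
    {z : ℂ | (f.eval z).im = 0} = {z : ℂ | (g.eval z).im = 0} ↔
      ∃ t : ℝ, ∀ z : ℂ, f.eval z - g.eval z = (t : ℂ) := by
  constructor
  · intro hfg
    have hsub (z : ℂ) (hz : (f.eval z).im = 0) : ((f - g).eval z).im = 0 := by
      have hgz : (g.eval z).im = 0 := (Set.ext_iff.mp hfg z).mp hz
      simp [hz, hgz]
    have hdeg : (f - g).natDegree < f.natDegree :=
      hfd ▸ IsMonicOfDegree.natDegree_sub_lt (by omega) ⟨hfd, hf⟩ ⟨hgd, hg⟩
    obtain ⟨t, ht⟩ := hf.exists_eq_C_ofReal_of_im_eval_eq_zero hsub hdeg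
    exact ⟨t, fun z => by rw [← eval_sub, ht, eval_C]⟩
  · rintro ⟨t, ht⟩
    ext z
    have him : (f.eval z).im = (g.eval z).im := by
      simpa [sub_eq_zero] using congrArg im (ht z)
    simp [him]
end

section
/- Let f be a nonconstant complex polynomial. Then every connected component of the set R(f) = {z ∈ ℂ : Re(f(z)) = 0} is unbounded; in other words, R(f) has no bounded connected component ('oval'). -/
/-!
Suppose a component `K` of `S = f⁻¹(iℝ)` were bounded, hence compact. In a locally compact
Hausdorff space a compact component of a closed set is cut out by an open set: there is an open
`V ∋ z` with `S ∩ V` compact (components of compact Hausdorff spaces are intersections of clopen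
sets). A nonconstant polynomial is an open map, so `iℝ ∩ f(V) = f(S ∩ V)` is open and compact,
hence clopen, in the connected imaginary axis; it would be the whole axis, which is not compact.
-/

open Set

section Topology

variable {X Y : Type*} [TopologicalSpace X] [TopologicalSpace Y]

theorem IsClosed.isClosed_connectedComponentIn {S : Set X} (hS : IsClosed S) (z : X) :
    IsClosed (connectedComponentIn S z) := by
  by_cases hz : z ∈ S
  · rw [connectedComponentIn_eq_image hz]
    exact hS.isClosedEmbedding_subtypeVal.isClosedMap _ isClosed_connectedComponent
  · rw [connectedComponentIn_eq_empty hz]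
    exact isClosed_empty

theorem exists_isClopen_mem_subset_of_connectedComponent_subset [CompactSpace X] [T2Space X]
    {x : X} {U : Set X} (hU : IsOpen U) (hxU : connectedComponent x ⊆ U) :
    ∃ s, IsClopen s ∧ x ∈ s ∧ s ⊆ U := by
  have hdisj : Uᶜ ∩ ⋂ s : { s : Set X // IsClopen s ∧ x ∈ s }, (s : Set X) = ∅ := by
    rw [← connectedComponent_eq_iInter_isClopen, ← disjoint_iff_inter_eq_empty]
    exact disjoint_compl_left_iff_subset.mpr hxU
  obtain ⟨t, ht⟩ := hU.isClosed_compl.isCompact.elim_finite_subfamily_closed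
    (fun s : { s : Set X // IsClopen s ∧ x ∈ s } => (s : Set X)) (fun s => s.2.1.1) hdisj
  refine ⟨⋂ s ∈ t, (s : Set X), isClopen_biInter_finset fun s _ => s.2.1,
    mem_iInter₂.mpr fun s _ => s.2.2, ?_⟩
  rw [← disjoint_compl_left_iff_subset, disjoint_iff_inter_eq_empty]
  exact ht

theorem exists_isOpen_isCompact_inter_of_isCompact_connectedComponentIn [LocallyCompactSpace X]
    [T2Space X] {S : Set X} (hS : IsClosed S) {z : X} (hz : z ∈ S)
    (hK : IsCompact (connectedComponentIn S z)) :
    ∃ V, IsOpen V ∧ z ∈ V ∧ IsCompact (S ∩ V) := by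
  obtain ⟨W, hW, hKW, hWc⟩ := exists_isOpen_superset_and_isCompact_closure hK
  set Z := S ∩ closure W
  have hzZ : z ∈ Z := ⟨hz, subset_closure (hKW (mem_connectedComponentIn hz))⟩
  have : CompactSpace Z := isCompact_iff_compactSpace.mp (hWc.inter_left hS)
  have hcomp : connectedComponent (⟨z, hzZ⟩ : Z) ⊆ Subtype.val ⁻¹' W := by
    intro p hp
    apply hKW
    apply connectedComponentIn_mono z inter_subset_left
    rw [connectedComponentIn_eq_image hzZ]
    exact mem_image_of_mem _ hp
  obtain ⟨s, hs, hzs, hsW⟩ := exists_isClopen_mem_subset_of_connectedComponent_subset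
    (hW.preimage continuous_subtype_val) hcomp
  obtain ⟨O, hO, rfl⟩ := isOpen_induced_iff.mp hs.isOpen
  have hSV : S ∩ (O ∩ W) = Subtype.val '' (Subtype.val ⁻¹' O : Set Z) := by
    ext w
    constructor
    · rintro ⟨hwS, hwO, hwW⟩
      exact ⟨⟨w, hwS, subset_closure hwW⟩, hwO, rfl⟩
    · rintro ⟨p, hpO, rfl⟩
      exact ⟨p.2.1, hpO, hsW hpO⟩
  refine ⟨O ∩ W, hO.inter hW, ⟨hzs, hKW (mem_connectedComponentIn hz)⟩, ?_⟩
  rw [hSV]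
  exact hs.isClosed.isCompact.image continuous_subtype_val

variable [T2Space Y] {g : X → Y}

theorem IsOpenMap.subset_image_preimage_inter (hg : IsOpenMap g) (hgc : Continuous g)
    {L : Set Y} (hL : IsPreconnected L) {V : Set X} (hV : IsOpen V)
    (hLV : IsCompact (g ⁻¹' L ∩ V)) (hne : (g ⁻¹' L ∩ V).Nonempty) :
    L ⊆ g '' (g ⁻¹' L ∩ V) := by
  set T := g '' (g ⁻¹' L ∩ V)
  have hT : g '' V ∩ L = T := by rw [← image_inter_preimage, inter_comm]
  intro y hy
  by_contra hyT
  have hcover : L ⊆ g '' V ∪ Tᶜ := fun y' _ =>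
    (em (y' ∈ T)).imp (fun h => hT.superset h |>.1) id
  obtain ⟨w, hwL, hwV⟩ := hne
  obtain ⟨y', hy'L, hy'V, hy'T⟩ := hL _ _ (hg V hV) (hLV.image hgc).isClosed.isOpen_compl
    hcover ⟨g w, hwL, mem_image_of_mem g hwV⟩ ⟨y, hy, hyT⟩
  exact hy'T (hT.subset ⟨hy'V, hy'L⟩)

theorem IsOpenMap.not_isCompact_connectedComponentIn_preimage [LocallyCompactSpace X]
    [T2Space X] (hg : IsOpenMap g) (hgc : Continuous g) {L : Set Y} (hLc : IsClosed L)
    (hL : IsPreconnected L) (hLnc : ¬ IsCompact L) {z : X} (hz : g z ∈ L) :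
    ¬ IsCompact (connectedComponentIn (g ⁻¹' L) z) := by
  intro hK
  obtain ⟨V, hV, hzV, hSV⟩ :=
    exists_isOpen_isCompact_inter_of_isCompact_connectedComponentIn (hLc.preimage hgc) hz hK
  exact hLnc <| (hSV.image hgc).of_isClosed_subset hLc <|
    hg.subset_image_preimage_inter hgc hL hV hSV ⟨z, hz, hzV⟩

end Topology

theorem Polynomial.isOpenMap_eval {f : Polynomial ℂ} (hf : 0 < f.natDegree) :
    IsOpenMap fun z => f.eval z := by
  refine (AnalyticOnNhd.is_constant_or_isOpenMap fun z _ => f.differentiable.analyticAt z)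
    |>.resolve_left ?_
  rintro ⟨w, hw⟩
  have : f = Polynomial.C w := Polynomial.funext fun z => by simpa using hw z
  simp [this] at hf

theorem Complex.isPreconnected_setOf_re_eq_zero : IsPreconnected {w : ℂ | w.re = 0} :=
  (convex_hyperplane Complex.reLm.isLinear 0).isPreconnected

theorem Complex.not_isCompact_setOf_re_eq_zero : ¬ IsCompact {w : ℂ | w.re = 0} := by
  intro h
  have him : Complex.im '' {w : ℂ | w.re = 0} = univ :=
    eq_univ_of_forall fun t => ⟨t * Complex.I, by simp, by simp⟩
  exact noncompact_univ ℝ (him ▸ h.image Complex.continuous_im)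

/-- For a nonconstant complex polynomial `f`, every connected component of
`R(f) = {z | Re (f z) = 0}` is unbounded. -/
theorem stmt3 (f : Polynomial ℂ) (hf : 0 < f.natDegree) :
    ∀ z ∈ {z : ℂ | (f.eval z).re = 0},
      ¬ Bornology.IsBounded (connectedComponentIn {z : ℂ | (f.eval z).re = 0} z) := by
  intro z hz hbdd
  have hclosed : IsClosed {w : ℂ | w.re = 0} := isClosed_eq Complex.continuous_re continuous_const
  refine (Polynomial.isOpenMap_eval hf).not_isCompact_connectedComponentIn_preimage
    f.continuous hclosed Complex.isPreconnected_setOf_re_eq_zero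
    Complex.not_isCompact_setOf_re_eq_zero hz ?_
  exact Metric.isCompact_of_isClosed_isBounded
    ((hclosed.preimage f.continuous).isClosed_connectedComponentIn z) hbdd
end

section
/- Let f(z) = z³·(z² − (5/2)·6^{1/5}·z + (5/3)·6^{2/5}). Then f has exactly two critical values, namely {f(ω) : ω ∈ ℂ, f'(ω) = 0} = {0, 1}; hence f is a Shabat polynomial with critical values 0 and 1. -/
/-!
With `a = 6^(1/5)` the polynomial is `f(z) = z³(z² - (5/2)az + (5/3)a²)`, whose derivative factors as
`5z²(z - a)²`. So the only critical points are `0` and `a`, with critical values `f 0 = 0` and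
`f a = a⁵/6 = 1`.
-/

namespace Shabat

lemma hasDerivAt_cube_mul_quadratic (a z : ℂ) :
    HasDerivAt (fun z : ℂ => z ^ 3 * (z ^ 2 - 5 / 2 * a * z + 5 / 3 * a ^ 2))
      (5 * z ^ 2 * (z - a) ^ 2) z := by
  have h : HasDerivAt (fun w : ℂ => w ^ 5 - 5 / 2 * a * w ^ 4 + 5 / 3 * a ^ 2 * w ^ 3)
      (5 * z ^ 4 - 5 / 2 * a * (4 * z ^ 3) + 5 / 3 * a ^ 2 * (3 * z ^ 2)) z := by
    simpa using ((hasDerivAt_pow 5 z).fun_sub ((hasDerivAt_pow 4 z).const_mul (5 / 2 * a))).fun_add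
      ((hasDerivAt_pow 3 z).const_mul (5 / 3 * a ^ 2))
  convert h using 1
  · funext w; ring
  · ring

lemma criticalValues_cube_mul_quadratic (a : ℂ) :
    {α : ℂ | ∃ ω : ℂ,
        deriv (fun z : ℂ => z ^ 3 * (z ^ 2 - 5 / 2 * a * z + 5 / 3 * a ^ 2)) ω = 0 ∧
        α = ω ^ 3 * (ω ^ 2 - 5 / 2 * a * ω + 5 / 3 * a ^ 2)} = {0, a ^ 5 / 6} := by
  simp only [(hasDerivAt_cube_mul_quadratic a _).deriv]
  ext α
  simp only [Set.mem_ofPred_eq, Set.mem_insert_iff, Set.mem_singleton_iff]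
  constructor
  · rintro ⟨ω, hω, rfl⟩
    have hcrit : ω = 0 ∨ ω = a := by simpa [sub_eq_zero] using hω
    rcases hcrit with rfl | rfl
    · left; ring
    · right; ring
  · rintro (rfl | rfl)
    · exact ⟨0, by ring, by ring⟩
    · exact ⟨a, by ring, by ring⟩

end Shabat

open Shabat in
/-- The polynomial `f(z) = z³(z² - (5/2)·6^(1/5)·z + (5/3)·6^(2/5))` has exactly two
critical values, namely `0` and `1`; hence `f` is a Shabat polynomial. -/
theorem stmt12 (f : ℂ → ℂ)
    (hf : ∀ z : ℂ, f z = z ^ 3 *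
      (z ^ 2 - (5 / 2) * (((6 : ℝ) ^ ((1 : ℝ) / 5) : ℝ) : ℂ) * z
        + (5 / 3) * (((6 : ℝ) ^ ((2 : ℝ) / 5) : ℝ) : ℂ))) :
    {α : ℂ | ∃ ω : ℂ, deriv f ω = 0 ∧ α = f ω} = {0, 1} := by
  set r : ℝ := (6 : ℝ) ^ ((1 : ℝ) / 5)
  have hr5 : r ^ 5 = 6 := by
    simp only [r, one_div]
    exact_mod_cast Real.rpow_inv_natCast_pow (by norm_num : (0 : ℝ) ≤ 6) (by norm_num : 5 ≠ 0)
  have hr2 : (6 : ℝ) ^ ((2 : ℝ) / 5) = r ^ 2 := by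
    rw [← Real.rpow_mul_natCast (by norm_num : (0 : ℝ) ≤ 6)]; norm_num
  have hf' : f = fun z : ℂ => z ^ 3 * (z ^ 2 - 5 / 2 * (r : ℂ) * z + 5 / 3 * (r : ℂ) ^ 2) := by
    funext z; rw [hf, hr2]; push_cast; rfl
  have hvalue : (r : ℂ) ^ 5 / 6 = 1 := by
    rw [div_eq_one_iff_eq (by norm_num)]; exact_mod_cast hr5
  subst hf'
  rw [← hvalue]
  exact criticalValues_cube_mul_quadratic (r : ℂ)
end

section
/- Let n ≥ 2 and c ∈ ℂ, and let f(z) = zⁿ − n·c·z. Then the set of critical values of f is exactly the solution set of a binomial equation: {f(ω) : ω ∈ ℂ, f'(ω) = 0} = {α ∈ ℂ : α^{n−1} = (1−n)^{n−1}·cⁿ}. In particular, when c = r·exp(θ·i) with r > 0, every critical value of f has modulus (n−1)·r^{n/(n−1)}. -/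
/-!
Since `f' = n (zⁿ⁻¹ - c)`, the critical points are the roots `ω` of `ωⁿ⁻¹ = c`, and at such a
point `ωⁿ = c ω`, so the critical value is `(1 - n) c ω`. Scaling by the nonzero factor
`(1 - n) c` carries the roots of `ωⁿ⁻¹ = c` bijectively onto the roots of
`αⁿ⁻¹ = (1 - n)ⁿ⁻¹ cⁿ` (when `c = 0` both sets are `{0}`). For the modulus, `‖ω‖ⁿ⁻¹ = ‖c‖ = r`
gives `‖(1 - n) c ω‖ = (n - 1) ‖ω‖ⁿ = (n - 1) r^(n/(n-1))`.
-/

open Set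

section Derivative

variable {𝕜 : Type*} [NontriviallyNormedField 𝕜]

theorem deriv_pow_sub_natCast_mul (n : ℕ) (c ω : 𝕜) :
    deriv (fun z : 𝕜 => z ^ n - n * c * z) ω = n * (ω ^ (n - 1) - c) := by
  have h : HasDerivAt (fun z : 𝕜 => z ^ n - n * c * z) (n * ω ^ (n - 1) - n * c * 1) ω :=
    (hasDerivAt_pow n ω).sub ((hasDerivAt_id ω).const_mul ((n : 𝕜) * c))
  rw [h.deriv]
  ring

theorem deriv_pow_sub_natCast_mul_eq_zero_iff {n : ℕ} (hn : (n : 𝕜) ≠ 0) (c ω : 𝕜) :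
    deriv (fun z : 𝕜 => z ^ n - n * c * z) ω = 0 ↔ ω ^ (n - 1) = c := by
  rw [deriv_pow_sub_natCast_mul, mul_eq_zero, sub_eq_zero, or_iff_right hn]

end Derivative

theorem pow_sub_natCast_mul_of_pow_pred_eq {R : Type*} [CommRing R] {n : ℕ} (hn : n ≠ 0)
    {c ω : R} (hω : ω ^ (n - 1) = c) : ω ^ n - n * c * ω = (1 - n) * c * ω := by
  rw [← Nat.sub_add_cancel (Nat.one_le_iff_ne_zero.mpr hn), pow_succ, hω]
  push_cast
  ring

theorem image_mul_setOf_pow_eq {K : Type*} [Field K] {m : ℕ} (hm : m ≠ 0) {a : K} (ha : a ≠ 0)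
    (c : K) : (fun ω => a * c * ω) '' {ω | ω ^ m = c} = {α | α ^ m = a ^ m * c ^ (m + 1)} := by
  ext α
  simp only [mem_image, mem_ofPred_eq]
  constructor
  · rintro ⟨ω, hω, rfl⟩
    rw [mul_pow, mul_pow, hω, pow_succ]
    ring
  · intro hα
    rcases eq_or_ne c 0 with rfl | hc
    · refine ⟨0, zero_pow hm, ?_⟩
      rw [zero_pow (Nat.succ_ne_zero m), mul_zero, pow_eq_zero_iff hm] at hα
      simp [hα]
    · have hac : a * c ≠ 0 := mul_ne_zero ha hc
      refine ⟨α / (a * c), ?_, mul_div_cancel₀ α hac⟩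
      rw [div_pow, hα, mul_pow, pow_succ]
      field_simp

theorem RCLike.norm_one_sub_natCast {K : Type*} [RCLike K] {n : ℕ} (hn : 1 ≤ n) :
    ‖(1 - n : K)‖ = n - 1 := by
  rw [norm_sub_rev, ← Nat.cast_pred hn, RCLike.norm_natCast, Nat.cast_pred hn]

theorem Real.pow_pred_rpow_div_pred {x : ℝ} (hx : 0 ≤ x) {n : ℕ} (hn : 1 < n) :
    (x ^ (n - 1)) ^ ((n : ℝ) / (n - 1)) = x ^ n := by
  have hn' : (n : ℝ) - 1 ≠ 0 := sub_ne_zero.mpr (by exact_mod_cast hn.ne')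
  rw [← Real.rpow_natCast_mul hx, Nat.cast_pred (by omega), mul_div_cancel₀ _ hn',
    Real.rpow_natCast]

/-- For `n ≥ 2` and `c ∈ ℂ`, the critical values of `f(z) = zⁿ - n·c·z` form the
solution set of the binomial equation `α^(n-1) = (1-n)^(n-1)·cⁿ`.  In particular, when
`c = r·exp(θi)` with `r > 0`, every critical value has modulus `(n-1)·r^(n/(n-1))`. -/
theorem stmt13 (n : ℕ) (hn : 2 ≤ n) (c : ℂ) (f : ℂ → ℂ)
    (hf : ∀ z : ℂ, f z = z ^ n - (n : ℂ) * c * z) :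
    ({α : ℂ | ∃ ω : ℂ, deriv f ω = 0 ∧ α = f ω} =
      {α : ℂ | α ^ (n - 1) = (1 - (n : ℂ)) ^ (n - 1) * c ^ n}) ∧
    (∀ r θ : ℝ, 0 < r → c = (r : ℂ) * Complex.exp ((θ : ℂ) * Complex.I) →
      ∀ ω : ℂ, deriv f ω = 0 →
        ‖f ω‖ = ((n : ℝ) - 1) * r ^ ((n : ℝ) / ((n : ℝ) - 1))) := by
  have hcrit : ∀ ω, deriv f ω = 0 ↔ ω ^ (n - 1) = c := funext hf ▸
    deriv_pow_sub_natCast_mul_eq_zero_iff (Nat.cast_ne_zero.mpr (show n ≠ 0 by omega)) c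
  have hval : ∀ ω, ω ^ (n - 1) = c → f ω = (1 - n) * c * ω := fun ω hω =>
    (hf ω).trans (pow_sub_natCast_mul_of_pow_pred_eq (by omega) hω)
  have h1n : (1 - n : ℂ) ≠ 0 := sub_ne_zero.mpr (Nat.cast_ne_one.mpr (show n ≠ 1 by omega)).symm
  constructor
  · calc {α : ℂ | ∃ ω, deriv f ω = 0 ∧ α = f ω}
        = (fun ω => (1 - n) * c * ω) '' {ω | ω ^ (n - 1) = c} := by
          ext α
          simp only [mem_ofPred_eq, mem_image, hcrit]
          exact exists_congr fun ω => and_congr_right fun hω => by rw [hval ω hω, eq_comm]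
      _ = _ := by rw [image_mul_setOf_pow_eq (by omega) h1n, Nat.sub_add_cancel (by omega)]
  · intro r θ hr hc ω hω
    rw [hcrit] at hω
    have hnorm_c : ‖c‖ = r := by simp [hc, Complex.norm_exp, abs_of_pos hr]
    rw [hval ω hω, norm_mul, norm_mul, RCLike.norm_one_sub_natCast (by omega), ← hnorm_c, ← hω,
      norm_pow, Real.pow_pred_rpow_div_pred (norm_nonneg ω) (by omega),
      mul_assoc, ← pow_succ, Nat.sub_add_cancel (by omega)]
end

section
/- Let n ≥ 1 and let f be a monic polynomial of degree n with real coefficients having n distinct real roots. Then every critical value of f is real (i.e., for every ω ∈ ℂ with f'(ω) = 0, f(ω) ∈ ℝ), and consequently the imaginary component I(f) = {z ∈ ℂ : Im(f(z)) = 0} is a connected subset of ℂ (the circular forest I(f) is a tree). -/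
/-!
Rolle's theorem puts a root of `f'` strictly between consecutive roots of `f`, so `f'` has
`n - 1` real roots and therefore no other complex roots: critical points, hence critical values,
are real.

For connectedness write `f z = ∏ (z - r)`. On the upper half-plane `∑ arg (z - r)` is a
continuous branch `θ (x, y)` of `arg f` with values in `(0, n π)`, strictly decreasing in `x`.
Hence each level set `θ = c` is the graph of a continuous function of `y > 0`, and it stays in a
bounded strip as `y → 0`, so its closure meets the real axis. `I(f)` is the real axis together
with the level sets `θ ∈ π ℤ` and their conjugates, so every point of `I(f)` is joined to `ℝ`
inside `I(f)`.
-/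

open Polynomial Filter Topology Set
open scoped Real ComplexConjugate

namespace Polynomial

theorem card_roots_eq_natDegree_of_card_toFinset {R : Type*} [CommRing R] [IsDomain R]
    [DecidableEq R] {f : R[X]} (hf : f.roots.toFinset.card = f.natDegree) :
    Multiset.card f.roots = f.natDegree :=
  le_antisymm (card_roots' f) (hf ▸ Multiset.toFinset_card_le _)

theorem Monic.eval_map_eq_prod_roots_toFinset {R A : Type*} [CommRing R] [IsDomain R]
    [DecidableEq R] [CommRing A] {f : R[X]} (hf : f.Monic)
    (hcard : f.roots.toFinset.card = f.natDegree) (φ : R →+* A) (z : A) :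
    (f.map φ).eval z = ∏ r ∈ f.roots.toFinset, (z - φ r) := by
  have hroots := card_roots_eq_natDegree_of_card_toFinset hcard
  have hnodup : f.roots.Nodup :=
    Multiset.toFinset_card_eq_card_iff_nodup.1 (hcard.trans hroots.symm)
  conv_lhs => rw [← prod_multiset_X_sub_C_of_monic_of_roots_card_eq hf hroots]
  rw [Finset.prod_eq_multiset_prod, Multiset.toFinset_val, hnodup.dedup]
  simp [Polynomial.map_multiset_prod, eval_multiset_prod]

theorem card_roots_derivative_eq_natDegree {f : ℝ[X]}
    (hf : Multiset.card f.roots = f.natDegree) :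
    Multiset.card (derivative f).roots = (derivative f).natDegree := by
  have := card_roots_le_derivative f
  have := natDegree_derivative_le f
  have := card_roots' (derivative f)
  omega

theorem exists_ofReal_eq_of_isRoot_map {p : ℝ[X]} (hp : Multiset.card p.roots = p.natDegree)
    (hp0 : p ≠ 0) {z : ℂ} (hz : (p.map (algebraMap ℝ ℂ)).IsRoot z) : ∃ x : ℝ, (x : ℂ) = z := by
  rw [← mem_roots (map_ne_zero hp0),
    ← roots_map_of_injective_of_card_eq_natDegree (algebraMap ℝ ℂ).injective hp] at hz
  obtain ⟨x, -, rfl⟩ := Multiset.mem_map.1 hz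
  exact ⟨x, rfl⟩

theorem im_eval_map_eq_zero_of_derivative_eval_eq_zero {f : ℝ[X]}
    (hf : Multiset.card f.roots = f.natDegree) {ω : ℂ}
    (hω : (derivative (f.map (algebraMap ℝ ℂ))).eval ω = 0) :
    ((f.map (algebraMap ℝ ℂ)).eval ω).im = 0 := by
  by_cases hf' : derivative f = 0
  · rw [eq_C_of_derivative_eq_zero hf']
    simp
  · rw [derivative_map] at hω
    obtain ⟨x, rfl⟩ := exists_ofReal_eq_of_isRoot_map
      (card_roots_derivative_eq_natDegree hf) hf' hω
    rw [← Complex.coe_algebraMap, eval_map_algebraMap, aeval_algebraMap_apply]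
    exact Complex.ofReal_im _

end Polynomial

theorem continuous_of_strictAnti_of_apply_eq {X Y α : Type*} [LinearOrder X]
    [TopologicalSpace X] [OrderTopology X] [TopologicalSpace Y] [LinearOrder α]
    [TopologicalSpace α] [OrderTopology α] {F : X → Y → α} {g : Y → X} {c : α}
    (hanti : ∀ y, StrictAnti (F · y)) (hcont : ∀ x, Continuous (F x))
    (hg : ∀ y, F (g y) y = c) : Continuous g := by
  refine continuous_iff_continuousAt.2 fun y ↦ tendsto_order.2 ⟨fun a ha ↦ ?_, fun b hb ↦ ?_⟩
  · have hca : c < F a y := hg y ▸ hanti y ha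
    filter_upwards [(hcont a).continuousAt.eventually (lt_mem_nhds hca)] with y' hy'
    exact (hanti y').lt_iff_gt.1 (hg y' ▸ hy')
  · have hbc : F b y < c := hg y ▸ hanti y hb
    filter_upwards [(hcont b).continuousAt.eventually (gt_mem_nhds hbc)] with y' hy'
    exact (hanti y').lt_iff_gt.1 (hg y' ▸ hy')

theorem Complex.arg_eq_pi_div_two_sub_arctan {z : ℂ} (hz : 0 < z.im) :
    arg z = π / 2 - Real.arctan (z.re / z.im) := by
  have hz0 : z ≠ 0 := fun h ↦ hz.ne' (by simp [h])
  have hnorm : √(1 + (z.re / z.im) ^ 2) = ‖z‖ / z.im := by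
    have : 1 + (z.re / z.im) ^ 2 = (‖z‖ / z.im) ^ 2 := by
      rw [div_pow, div_pow, Complex.sq_norm, Complex.normSq_apply]
      field_simp
      ring
    rw [this, Real.sqrt_sq (by positivity)]
  rw [arg_of_im_pos hz, Real.arccos_eq_pi_div_two_sub_arcsin, Real.arctan_eq_arcsin, hnorm]
  field_simp

theorem Real.pi_div_two_sub_arctan_le_inv {a t : ℝ} (ha : 0 < a) (hat : a ≤ t) :
    π / 2 - arctan t ≤ a⁻¹ := by
  have ht : 0 < t := ha.trans_le hat
  rw [← arctan_inv_of_pos ht]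
  calc arctan t⁻¹ ≤ tan (arctan t⁻¹) :=
        le_tan (arctan_nonneg.2 (inv_nonneg.2 ht.le)) (arctan_lt_pi_div_two _)
    _ = t⁻¹ := tan_arctan _
    _ ≤ a⁻¹ := inv_anti₀ ha hat

-- For `0 < y`, this is `∑ r ∈ s, arg (x + y * I - r)`, a continuous branch of
-- `arg (∏ r ∈ s, (x + y * I - r))` on the upper half-plane.
noncomputable def argSum (s : Finset ℝ) (x y : ℝ) : ℝ :=
  ∑ r ∈ s, (π / 2 - Real.arctan ((x - r) / y))

section ArgSum

variable {s : Finset ℝ} {x y c : ℝ}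

theorem argSum_pos (hs : s.Nonempty) : 0 < argSum s x y :=
  Finset.sum_pos (fun _ _ ↦ sub_pos.2 (Real.arctan_lt_pi_div_two _)) hs

theorem argSum_lt_card_mul_pi (hs : s.Nonempty) : argSum s x y < s.card * π := by
  calc argSum s x y < ∑ _r ∈ s, π :=
        Finset.sum_lt_sum_of_nonempty hs fun r _ ↦ by
          linarith [Real.neg_pi_div_two_lt_arctan ((x - r) / y)]
    _ = s.card * π := by rw [Finset.sum_const, nsmul_eq_mul]

theorem strictAnti_argSum (hs : s.Nonempty) (hy : 0 < y) : StrictAnti (argSum s · y) :=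
  fun _ _ hx ↦ Finset.sum_lt_sum_of_nonempty hs fun _ _ ↦
    sub_lt_sub_left (Real.arctan_strictMono (by gcongr)) _

theorem continuous_argSum : Continuous (argSum s · y) := by
  unfold argSum
  fun_prop

theorem continuousOn_argSum_Ioi : ContinuousOn (argSum s x) (Ioi 0) := by
  unfold argSum
  exact continuousOn_finsetSum _ fun r _ ↦ continuousOn_const.sub
    (Real.continuous_arctan.comp_continuousOn
      (continuousOn_const.div continuousOn_id fun _ hy ↦ ne_of_gt hy))

theorem argSum_max'_add_le (hs : s.Nonempty) (hy : 0 < y) (hc : 0 < c) :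
    argSum s (s.max' hs + s.card * y / c) y ≤ c := by
  calc argSum s (s.max' hs + s.card * y / c) y ≤ ∑ _r ∈ s, (s.card / c)⁻¹ := by
        refine Finset.sum_le_sum fun r hr ↦ Real.pi_div_two_sub_arctan_le_inv (by positivity) ?_
        rw [le_div_iff₀ hy]
        linarith [s.le_max' r hr, show s.card / c * y = s.card * y / c by ring]
    _ = c := by
      rw [Finset.sum_const, nsmul_eq_mul]
      field_simp

theorem card_mul_pi_sub_le_argSum_min'_sub (hs : s.Nonempty) (hy : 0 < y) (hc : 0 < c) :
    s.card * π - c ≤ argSum s (s.min' hs - s.card * y / c) y := by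
  calc s.card * π - c = ∑ _r ∈ s, (π - (s.card / c)⁻¹) := by
        rw [Finset.sum_const, nsmul_eq_mul]
        field_simp
    _ ≤ argSum s (s.min' hs - s.card * y / c) y := by
        refine Finset.sum_le_sum fun r hr ↦ ?_
        have hle : s.card / c ≤ (r - (s.min' hs - s.card * y / c)) / y := by
          rw [le_div_iff₀ hy]
          linarith [s.min'_le r hr, show s.card / c * y = s.card * y / c by ring]
        have := Real.pi_div_two_sub_arctan_le_inv (by positivity) hle
        rw [← neg_sub r, neg_div, Real.arctan_neg]
        linarith

theorem exists_argSum_eq (hs : s.Nonempty) (hy : 0 < y) (hc₀ : 0 < c) (hc : c < s.card * π) :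
    ∃ x, argSum s x y = c :=
  mem_range_of_exists_le_of_exists_ge continuous_argSum ⟨_, argSum_max'_add_le hs hy hc₀⟩
    ⟨_, by simpa using card_mul_pi_sub_le_argSum_min'_sub hs hy (sub_pos.2 hc)⟩

theorem mem_Icc_of_argSum_eq (hs : s.Nonempty) (hy : 0 < y) (hc₀ : 0 < c) (hc : c < s.card * π)
    (hx : argSum s x y = c) :
    x ∈ Icc (s.min' hs - s.card * y / (s.card * π - c)) (s.max' hs + s.card * y / c) := by
  constructor
  · rw [← (strictAnti_argSum hs hy).le_iff_ge, hx]
    simpa using card_mul_pi_sub_le_argSum_min'_sub hs hy (sub_pos.2 hc)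
  · rw [← (strictAnti_argSum hs hy).le_iff_ge, hx]
    exact argSum_max'_add_le hs hy hc₀

def argLevel (s : Finset ℝ) (c : ℝ) : Set ℂ :=
  {z | 0 < z.im ∧ argSum s z.re z.im = c}

theorem isPreconnected_argLevel (hs : s.Nonempty) (hc₀ : 0 < c) (hc : c < s.card * π) :
    IsPreconnected (argLevel s c) := by
  choose g hg using fun y : Ioi (0 : ℝ) ↦ exists_argSum_eq hs y.2 hc₀ hc
  have hg_cont : Continuous g :=
    continuous_of_strictAnti_of_apply_eq (fun y ↦ strictAnti_argSum hs y.2)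
      (fun _ ↦ continuousOn_argSum_Ioi.comp_continuous continuous_subtype_val Subtype.prop) hg
  have hrange : argLevel s c = range fun y : Ioi (0 : ℝ) ↦ (g y : ℂ) + (y : ℝ) * Complex.I := by
    ext z
    constructor
    · rintro ⟨hz, hzc⟩
      refine ⟨⟨z.im, hz⟩, ?_⟩
      show ((g ⟨z.im, hz⟩ : ℝ) : ℂ) + (z.im : ℂ) * Complex.I = z
      rw [(strictAnti_argSum hs hz).injective ((hg ⟨z.im, hz⟩).trans hzc.symm),
        Complex.re_add_im]
    · rintro ⟨y, rfl⟩
      simpa [argLevel] using ⟨y.2, hg y⟩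
  have : PreconnectedSpace (Ioi (0 : ℝ)) :=
    isPreconnected_iff_preconnectedSpace.1 isPreconnected_Ioi
  rw [hrange]
  exact isPreconnected_range (by fun_prop)

theorem exists_ofReal_mem_closure_argLevel (hs : s.Nonempty) (hc₀ : 0 < c)
    (hc : c < s.card * π) : ∃ x : ℝ, (x : ℂ) ∈ closure (argLevel s c) := by
  set K := argLevel s c ∩ {z | z.im ≤ 1}
  have hK : Bornology.IsBounded K := by
    refine ((Metric.isBounded_Icc (s.min' hs - s.card / (s.card * π - c))
      (s.max' hs + s.card / c)).reProdIm (Metric.isBounded_Icc 0 1)).subset ?_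
    rintro z ⟨⟨hz, hzc⟩, hz1⟩
    have hzx := mem_Icc_of_argSum_eq hs hz hc₀ hc hzc
    have hcpi : 0 < s.card * π - c := sub_pos.2 hc
    have hcy : s.card * z.im ≤ s.card := mul_le_of_le_one_right (by positivity) hz1
    refine ⟨⟨?_, ?_⟩, hz.le, hz1⟩
    · have : s.card * z.im / (s.card * π - c) ≤ s.card / (s.card * π - c) := by gcongr
      linarith [hzx.1]
    · have : s.card * z.im / c ≤ s.card / c := by gcongr
      linarith [hzx.2]
  have him : Ioc (0 : ℝ) 1 ⊆ Complex.im '' K := fun y hy ↦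
    let ⟨x, hx⟩ := exists_argSum_eq hs hy.1 hc₀ hc
    ⟨x + y * Complex.I, ⟨⟨by simpa using hy.1, by simpa using hx⟩, by simpa using hy.2⟩, by simp⟩
  -- `im '' closure K` is compact, hence closed, and contains `Ioc 0 1`, hence also `0`.
  have hclosed : IsClosed (Complex.im '' closure K) :=
    (hK.isCompact_closure.image Complex.continuous_im).isClosed
  obtain ⟨w, hw, hw0⟩ : (0 : ℝ) ∈ Complex.im '' closure K := by
    refine closure_minimal (him.trans (image_mono subset_closure)) hclosed ?_
    rw [closure_Ioc zero_ne_one]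
    exact ⟨le_rfl, zero_le_one⟩
  refine ⟨w.re, ?_⟩
  rw [show (w.re : ℂ) = w from Complex.ext rfl (by simp [hw0])]
  exact closure_mono inter_subset_left hw

theorem im_prod_sub_ofReal {z : ℂ} (hz : 0 < z.im) :
    (∏ r ∈ s, (z - r)).im = (∏ r ∈ s, ‖z - r‖) * Real.sin (argSum s z.re z.im) := by
  have harg : argSum s z.re z.im = ∑ r ∈ s, Complex.arg (z - r) :=
    Finset.sum_congr rfl fun r _ ↦ by
      rw [Complex.arg_eq_pi_div_two_sub_arctan (by simpa using hz)]
      simp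
  calc (∏ r ∈ s, (z - r)).im
      = (∏ r ∈ s, ((‖z - r‖ : ℂ) * Complex.exp (Complex.arg (z - r) * Complex.I))).im := by
        simp only [Complex.norm_mul_exp_arg_mul_I]
    _ = ((∏ r ∈ s, ‖z - r‖ : ℝ) *
          Complex.exp ((∑ r ∈ s, Complex.arg (z - r) : ℝ) * Complex.I)).im := by
        rw [Finset.prod_mul_distrib, Complex.ofReal_prod, Complex.ofReal_sum, Finset.sum_mul,
          Complex.exp_sum]
    _ = _ := by rw [Complex.im_ofReal_mul, Complex.exp_ofReal_mul_I_im, harg]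

def imaginaryComponent (s : Finset ℝ) : Set ℂ :=
  {z | (∏ r ∈ s, (z - r)).im = 0}

theorem range_ofReal_subset_imaginaryComponent :
    range ((↑) : ℝ → ℂ) ⊆ imaginaryComponent s := by
  rintro _ ⟨x, rfl⟩
  show (∏ r ∈ s, ((x : ℂ) - r)).im = 0
  exact_mod_cast Complex.ofReal_im (∏ r ∈ s, (x - r))

theorem conj_mem_imaginaryComponent_iff {z : ℂ} :
    conj z ∈ imaginaryComponent s ↔ z ∈ imaginaryComponent s := by
  have hconj : ∏ r ∈ s, (conj z - r) = conj (∏ r ∈ s, (z - r)) := by simp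
  show (∏ r ∈ s, (conj z - r)).im = 0 ↔ (∏ r ∈ s, (z - r)).im = 0
  rw [hconj, Complex.conj_im, neg_eq_zero]

theorem exists_isPreconnected_of_im_pos (hs : s.Nonempty) {z : ℂ}
    (hzI : z ∈ imaginaryComponent s) (hz : 0 < z.im) :
    ∃ t ⊆ imaginaryComponent s, (0 : ℂ) ∈ t ∧ z ∈ t ∧ IsPreconnected t := by
  set c := argSum s z.re z.im
  have hsin : Real.sin c = 0 := by
    have hnorm : 0 < ∏ r ∈ s, ‖z - r‖ := Finset.prod_pos fun r _ ↦
      norm_pos_iff.2 fun h ↦ hz.ne' (by simpa using congrArg Complex.im h)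
    have hprod : (∏ r ∈ s, ‖z - r‖) * Real.sin c = 0 := im_prod_sub_ofReal hz ▸ hzI
    exact (mul_eq_zero.1 hprod).resolve_left hnorm.ne'
  have hc₀ : 0 < c := argSum_pos hs
  have hc : c < s.card * π := argSum_lt_card_mul_pi hs
  have hlevel : argLevel s c ⊆ imaginaryComponent s := by
    rintro w ⟨hw, hwc⟩
    simp [imaginaryComponent, im_prod_sub_ofReal hw, hwc, hsin]
  obtain ⟨x, hx⟩ := exists_ofReal_mem_closure_argLevel hs hc₀ hc
  refine ⟨range ((↑) : ℝ → ℂ) ∪ insert (x : ℂ) (argLevel s c),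
    union_subset range_ofReal_subset_imaginaryComponent
      (insert_subset (range_ofReal_subset_imaginaryComponent ⟨x, rfl⟩) hlevel),
    mem_union_left _ ⟨0, Complex.ofReal_zero⟩, Or.inr (Or.inr ⟨hz, rfl⟩), ?_⟩
  exact (isConnected_range Complex.continuous_ofReal).isPreconnected.union (x : ℂ) ⟨x, rfl⟩
    (mem_insert _ _) ((isPreconnected_argLevel hs hc₀ hc).subset_closure (subset_insert _ _)
      (insert_subset hx subset_closure))

theorem isConnected_imaginaryComponent (hs : s.Nonempty) :
    IsConnected (imaginaryComponent s) := by
  refine ⟨⟨0, range_ofReal_subset_imaginaryComponent ⟨0, Complex.ofReal_zero⟩⟩,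
    isPreconnected_of_forall 0 fun z hz ↦ ?_⟩
  rcases lt_trichotomy z.im 0 with hlt | h0 | hgt
  · obtain ⟨t, htI, h0t, hzt, ht⟩ := exists_isPreconnected_of_im_pos hs
      (conj_mem_imaginaryComponent_iff.2 hz) (by simpa using hlt)
    refine ⟨conj '' t, ?_, ⟨0, h0t, map_zero _⟩, ⟨conj z, hzt, Complex.conj_conj z⟩,
      ht.image _ Complex.continuous_conj.continuousOn⟩
    rintro _ ⟨w, hw, rfl⟩
    exact conj_mem_imaginaryComponent_iff.2 (htI hw)
  · exact ⟨range ((↑) : ℝ → ℂ), range_ofReal_subset_imaginaryComponent,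
      ⟨0, Complex.ofReal_zero⟩, ⟨z.re, Complex.ext rfl (by simp [h0])⟩,
      (isConnected_range Complex.continuous_ofReal).isPreconnected⟩
  · exact exists_isPreconnected_of_im_pos hs hz hgt

end ArgSum

/-- If `f` is a monic real polynomial of degree `n ≥ 1` with `n` distinct real roots,
then every critical value of `f` (viewed over `ℂ`) is real, and consequently the
imaginary component `I(f) = {z : ℂ | Im (f z) = 0}` is a connected subset of `ℂ`
(the circular forest `I(f)` is a tree). -/
theorem stmt19 (n : ℕ) (hn : 1 ≤ n) (f : Polynomial ℝ)
    (hf : f.Monic) (hd : f.natDegree = n)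
    (hroots : f.roots.toFinset.card = n) :
    (∀ ω : ℂ, (Polynomial.derivative (f.map (algebraMap ℝ ℂ))).eval ω = 0 →
      ((f.map (algebraMap ℝ ℂ)).eval ω).im = 0) ∧
    IsConnected {z : ℂ | ((f.map (algebraMap ℝ ℂ)).eval z).im = 0} := by
  have hcard : f.roots.toFinset.card = f.natDegree := hroots.trans hd.symm
  refine ⟨fun ω ↦ im_eval_map_eq_zero_of_derivative_eval_eq_zero
    (card_roots_eq_natDegree_of_card_toFinset hcard), ?_⟩
  simp_rw [hf.eval_map_eq_prod_roots_toFinset hcard, Complex.coe_algebraMap]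
  exact isConnected_imaginaryComponent (Finset.card_pos.1 (by omega))
end
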